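/- For w ∈ [−1/3, 1], the Werner state ρ_w satisfies the CHSH inequality for all measurement settings — i.e. Re(Tr(ρ_w · B(a,a',b,b'))) ≤ 2 for all unit vectors a, a', b, b' ∈ ℝ³ — if and only if w ≤ 1/√2. -/
import Mathlib


open Matrix
open scoped Kronecker ComplexOrder

def pairToFin4 (p : Fin 2 × Fin 2) : Fin 4 := ⟨2 * p.1.val + p.2.val, by omega⟩

/-- The Werner state `ρ_w`, indexed by `Fin 2 × Fin 2` in the basis order
`(0,0), (0,1), (1,0), (1,1)`. -/
noncomputable def wernerState (w : ℝ) : Matrix (Fin 2 × Fin 2) (Fin 2 × Fin 2) ℂ :=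
  fun p q =>
    !![(((1 - w) / 4 : ℝ) : ℂ), 0, 0, 0;
       0, (((1 + w) / 4 : ℝ) : ℂ), ((-(w / 2) : ℝ) : ℂ), 0;
       0, ((-(w / 2) : ℝ) : ℂ), (((1 + w) / 4 : ℝ) : ℂ), 0;
       0, 0, 0, (((1 - w) / 4 : ℝ) : ℂ)] (pairToFin4 p) (pairToFin4 q)

noncomputable def pauli1 : Matrix (Fin 2) (Fin 2) ℂ := !![0, 1; 1, 0]
noncomputable def pauli2 : Matrix (Fin 2) (Fin 2) ℂ := !![0, -Complex.I; Complex.I, 0]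
noncomputable def pauli3 : Matrix (Fin 2) (Fin 2) ℂ := !![1, 0; 0, -1]

/-- For `a ∈ ℝ³`, the matrix `a·σ = a₁σ₁ + a₂σ₂ + a₃σ₃`. -/
noncomputable def dotPauli (a : Fin 3 → ℝ) : Matrix (Fin 2) (Fin 2) ℂ :=
  (a 0 : ℂ) • pauli1 + (a 1 : ℂ) • pauli2 + (a 2 : ℂ) • pauli3

def IsUnitVec (a : Fin 3 → ℝ) : Prop := a 0 ^ 2 + a 1 ^ 2 + a 2 ^ 2 = 1

/-- The CHSH operator `B(a,a',b,b') = (a·σ)⊗ₖ((b+b')·σ) + (a'·σ)⊗ₖ((b−b')·σ)`. -/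
noncomputable def chshOperator (a a' b b' : Fin 3 → ℝ) :
    Matrix (Fin 2 × Fin 2) (Fin 2 × Fin 2) ℂ :=
  dotPauli a ⊗ₖ dotPauli (b + b') + dotPauli a' ⊗ₖ dotPauli (b - b')


lemma pairToFin4_00 : pairToFin4 (0,0) = 0 := rfl
lemma pairToFin4_01 : pairToFin4 (0,1) = 1 := rfl
lemma pairToFin4_10 : pairToFin4 (1,0) = 2 := rfl
lemma pairToFin4_11 : pairToFin4 (1,1) = 3 := rfl

set_option maxHeartbeats 2000000 in
lemma werner_trace_eq (w : ℝ) (a a' b b' : Fin 3 → ℝ) :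
    (Matrix.trace (wernerState w * chshOperator a a' b b')).re =
      -w * ((a 0 * (b 0 + b' 0) + a 1 * (b 1 + b' 1) + a 2 * (b 2 + b' 2))
        + (a' 0 * (b 0 - b' 0) + a' 1 * (b 1 - b' 1) + a' 2 * (b 2 - b' 2))) := by
  have h : Matrix.trace (wernerState w * chshOperator a a' b b') =
      ((-w * ((a 0 * (b 0 + b' 0) + a 1 * (b 1 + b' 1) + a 2 * (b 2 + b' 2))
        + (a' 0 * (b 0 - b' 0) + a' 1 * (b 1 - b' 1) + a' 2 * (b 2 - b' 2))) : ℝ) : ℂ) := by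
    simp only [Matrix.trace, Matrix.diag, Matrix.mul_apply, wernerState, chshOperator,
      dotPauli, pauli1, pauli2, pauli3, Matrix.kroneckerMap_apply, Fintype.sum_prod_type,
      Fin.sum_univ_succ, Finset.sum_empty, Fin.sum_univ_zero,
      Matrix.add_apply, Matrix.smul_apply, Pi.add_apply, Pi.sub_apply,
      Matrix.cons_val', Matrix.cons_val_zero, Matrix.cons_val_one, Matrix.head_cons,
      Matrix.empty_val', Matrix.cons_val_fin_one, Matrix.head_fin_const, smul_eq_mul]
    simp only [Fin.succ_zero_eq_one, pairToFin4_00, pairToFin4_01, pairToFin4_10, pairToFin4_11]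
    norm_num [Matrix.cons_val_zero, Matrix.cons_val_one, Matrix.head_cons,
      Matrix.cons_val_two, Matrix.cons_val_three, Matrix.tail_cons, Matrix.cons_val_fin_one,
      Matrix.vecHead, Matrix.vecTail, Complex.ext_iff]
    constructor <;> ring
  rw [h, Complex.ofReal_re]

lemma cs3 (x0 x1 x2 u0 u1 u2 : ℝ) (hx : x0^2+x1^2+x2^2 = 1) :
    (x0*u0+x1*u1+x2*u2)^2 ≤ u0^2+u1^2+u2^2 := by
  nlinarith [sq_nonneg (x0*u1-x1*u0), sq_nonneg (x0*u2-x2*u0), sq_nonneg (x1*u2-x2*u1)]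

lemma sum_sq_le_eight (p q U V : ℝ) (h1 : p^2 ≤ U) (h2 : q^2 ≤ V) (h3 : U + V = 4) :
    (p + q)^2 ≤ 8 := by nlinarith [sq_nonneg (p - q)]

lemma neg_le_two_of_sq_le_four (x : ℝ) (h : x^2 ≤ 4) : -x ≤ 2 := by
  nlinarith [sq_nonneg (x + 2)]

set_option maxHeartbeats 1000000 in
theorem werner_chsh_local_iff (w : ℝ) (hw : w ∈ Set.Icc (-(1 / 3) : ℝ) 1) :
    (∀ a a' b b' : Fin 3 → ℝ, IsUnitVec a → IsUnitVec a' → IsUnitVec b → IsUnitVec b' →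
        (Matrix.trace (wernerState w * chshOperator a a' b b')).re ≤ 2) ↔
      w ≤ 1 / Real.sqrt 2 := by
  obtain ⟨hwl, hwu⟩ := hw
  set s := Real.sqrt 2 with hs_def
  have hsp : (0 : ℝ) < s := Real.sqrt_pos.mpr (by norm_num)
  have hs : s ^ 2 = 2 := Real.sq_sqrt (by norm_num)
  have hs1 : 1 ≤ s := by nlinarith
  have hs2 : s ≤ 2 := by nlinarith
  constructor
  · intro H
    have h12 : (1 / s) ^ 2 = 1 / 2 := by rw [div_pow, one_pow, hs]
    have h := H ![1,0,0] ![0,0,1] ![-(1/s),0,-(1/s)] ![-(1/s),0,1/s]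
      (by simp [IsUnitVec]) (by simp [IsUnitVec])
      (by simp only [IsUnitVec, Matrix.cons_val_zero, Matrix.cons_val_one, Matrix.head_cons,
            Matrix.cons_val_two, Matrix.tail_cons, neg_sq]
          rw [h12]; norm_num)
      (by simp only [IsUnitVec, Matrix.cons_val_zero, Matrix.cons_val_one, Matrix.head_cons,
            Matrix.cons_val_two, Matrix.tail_cons, neg_sq]
          rw [h12]; norm_num)
    rw [werner_trace_eq] at h
    simp only [Matrix.cons_val_zero, Matrix.cons_val_one, Matrix.head_cons,
      Matrix.cons_val_two, Matrix.tail_cons] at h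
    have htp : 0 < 1 / s := by positivity
    nlinarith [h, h12, htp]
  · intro hwr a a' b b' ha ha' hb hb'
    rw [werner_trace_eq]
    unfold IsUnitVec at ha ha' hb hb'
    have hws : w * s ≤ 1 := by
      have := (le_div_iff₀ hsp).mp hwr
      linarith
    have hws' : -1 ≤ w * s := by nlinarith
    have hw2 : w ^ 2 ≤ 1 / 2 := by nlinarith
    set p := a 0 * (b 0 + b' 0) + a 1 * (b 1 + b' 1) + a 2 * (b 2 + b' 2) with hp_def
    set q := a' 0 * (b 0 - b' 0) + a' 1 * (b 1 - b' 1) + a' 2 * (b 2 - b' 2) with hq_def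
    have h1 : p ^ 2 ≤ (b 0 + b' 0)^2 + (b 1 + b' 1)^2 + (b 2 + b' 2)^2 :=
      cs3 _ _ _ _ _ _ ha
    have h2 : q ^ 2 ≤ (b 0 - b' 0)^2 + (b 1 - b' 1)^2 + (b 2 - b' 2)^2 :=
      cs3 _ _ _ _ _ _ ha'
    have h3 : ((b 0 + b' 0)^2 + (b 1 + b' 1)^2 + (b 2 + b' 2)^2)
        + ((b 0 - b' 0)^2 + (b 1 - b' 1)^2 + (b 2 - b' 2)^2) = 4 := by
      linear_combination 2 * hb + 2 * hb'
    have h4 : (p + q) ^ 2 ≤ 8 := sum_sq_le_eight _ _ _ _ h1 h2 h3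
    have h5 : (w * (p + q)) ^ 2 ≤ 4 := by
      have hm := mul_le_mul hw2 h4 (sq_nonneg _) (by norm_num : (0:ℝ) ≤ 1/2)
      calc (w * (p + q)) ^ 2 = w ^ 2 * (p + q) ^ 2 := by ring
        _ ≤ (1/2) * 8 := hm
        _ = 4 := by norm_num
    have h6 := neg_le_two_of_sq_le_four _ h5
    linarith
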